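/- arXiv:2404.02366 — 4 statements merged into one kernel-verified Lean document; each statement's English description precedes it below -/
import Mathlib

section
/- Fix φ₀ ∈ L²(ℝ), h ∈ (0,1], and set α_n = h (P_{≤π/(2h)} φ₀)(hn), where P_{≤N} is a smooth Littlewood–Paley projection to frequencies |ξ| ≤ 2N. Then for every m ∈ ℕ, Σ_{|n|≥m} |α_n|² ≲ h ∫_{|x| ≥ (m - 1/2)h} |ℳφ₀(x)|² dx, where ℳφ₀ is the Hardy–Littlewood maximal function of φ₀, with implicit constant independent of h and m. -/
/-!
With `N = π / (2h)`, the Schwartz decay of `ψ` bounds the kernel `N ψ(N t)` by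
`D N / (1 + (N t)²)`, which is dominated by the superposition `D Σⱼ 4 N 4⁻ʲ 𝟙{|t| < 2ʲ/N}` of
ball indicators, whose masses `8 D 2⁻ʲ` are summable. Hence `|α_n| / h ≲ ℳφ₀(x)` for every `x` with
`|x - hn| ≤ h/2 < 1/N`. Averaging the square of this over the cell `(hn - h/2, hn + h/2]` gives
`|α_n|² ≲ h ∫_cell (ℳφ₀)²`, and for `|n| ≥ m` these disjoint cells lie in `|x| ≥ (m - 1/2) h`.
-/

open MeasureTheory Real

/-- The centered Hardy–Littlewood maximal function of `φ`. -/
noncomputable def cmax (φ : ℝ → ℂ) (x : ℝ) : ENNReal :=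
  ⨆ (r : ℝ) (_ : 0 < r),
    (ENNReal.ofReal (2 * r))⁻¹ * ∫⁻ y in Set.Ioo (x - r) (x + r), (‖φ y‖₊ : ENNReal)

open Metric Set
open scoped ENNReal

theorem ENNReal.ofReal_tsum_le_tsum_ofReal {ι : Type*} {f : ι → ℝ} (hf : ∀ i, 0 ≤ f i) :
    ENNReal.ofReal (∑' i, f i) ≤ ∑' i, ENNReal.ofReal (f i) := by
  by_cases hs : Summable f
  · rw [ENNReal.ofReal_tsum_of_nonneg hf hs]
  · rw [tsum_eq_zero_of_not_summable hs, ENNReal.ofReal_zero]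
    exact bot_le

theorem SchwartzMap.exists_norm_le_mul_inv_one_add_sq {F : Type*} [NormedAddCommGroup F]
    [NormedSpace ℝ F] (ψ : SchwartzMap ℝ F) : ∃ D > 0, ∀ s : ℝ, ‖ψ s‖ ≤ D * (1 + s ^ 2)⁻¹ := by
  obtain ⟨C₀, hC₀, h₀⟩ := ψ.decay 0 0
  obtain ⟨C₂, hC₂, h₂⟩ := ψ.decay 2 0
  refine ⟨C₀ + C₂, by positivity, fun s => ?_⟩
  rw [← div_eq_mul_inv, le_div_iff₀ (by positivity)]
  have hs₀ := h₀ s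
  have hs₂ := h₂ s
  rw [norm_iteratedFDeriv_zero, pow_zero, one_mul] at hs₀
  rw [norm_iteratedFDeriv_zero, Real.norm_eq_abs, sq_abs] at hs₂
  linarith

theorem exists_abs_lt_two_pow_and_inv_one_add_sq_le (s : ℝ) :
    ∃ j : ℕ, |s| < 2 ^ j ∧ (1 + s ^ 2)⁻¹ ≤ 4 / 4 ^ j := by
  by_cases hs : |s| < 1
  · refine ⟨0, by simpa using hs, ?_⟩
    rw [pow_zero, div_one]
    exact (inv_le_one_of_one_le₀ (by nlinarith)).trans (by norm_num)
  · obtain ⟨n, hn, hn'⟩ := exists_nat_pow_near (not_lt.1 hs) one_lt_two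
    refine ⟨n + 1, hn', ?_⟩
    have h4 : (4 : ℝ) / 4 ^ (n + 1) = ((2 ^ n) ^ 2)⁻¹ := by
      rw [← pow_mul, mul_comm, pow_mul, pow_succ]; field_simp; norm_num
    rw [h4]
    refine inv_anti₀ (by positivity) ?_
    have : ((2 : ℝ) ^ n) ^ 2 ≤ |s| ^ 2 := by gcongr
    rw [sq_abs] at this
    linarith

theorem ofReal_mul_inv_one_add_sq_le_tsum_indicator {N : ℝ} (hN : 0 < N) (t : ℝ) :
    ENNReal.ofReal (N * (1 + (N * t) ^ 2)⁻¹) ≤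
      ∑' j : ℕ, (ball 0 (2 ^ j / N)).indicator (fun _ => ENNReal.ofReal (4 * N / 4 ^ j)) t := by
  obtain ⟨j, hj, hle⟩ := exists_abs_lt_two_pow_and_inv_one_add_sq_le (N * t)
  refine le_trans ?_ (ENNReal.le_tsum j)
  have ht : t ∈ ball (0 : ℝ) (2 ^ j / N) := by
    rw [mem_ball_zero_iff, Real.norm_eq_abs, lt_div_iff₀ hN, mul_comm]
    rwa [abs_mul, abs_of_pos hN] at hj
  rw [indicator_of_mem ht, mul_comm 4 N, mul_div_assoc]
  exact ENNReal.ofReal_le_ofReal (mul_le_mul_of_nonneg_left hle hN.le)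

theorem lintegral_ball_le_cmax (f : ℝ → ℂ) (y : ℝ) {r : ℝ} (hr : 0 < r) :
    ∫⁻ u in ball y r, ‖f u‖ₑ ≤ ENNReal.ofReal (2 * r) * cmax f y := by
  rw [Real.ball_eq_Ioo, ← ENNReal.inv_mul_le_iff (ENNReal.ofReal_pos.2 (by positivity)).ne'
    ENNReal.ofReal_ne_top]
  exact le_iSup₂_of_le (f := fun r (_ : 0 < r) => _) r hr le_rfl

theorem lintegral_mul_comp_sub_le_cmax {K : ℝ → ℝ≥0∞} {c : ℕ → ℝ≥0∞} {r : ℕ → ℝ}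
    (hK : ∀ t, K t ≤ ∑' j, (ball 0 (r j)).indicator (fun _ => c j) t)
    {f : ℝ → ℂ} (hf : AEStronglyMeasurable f) {x y : ℝ} (hxy : ∀ j, dist x y < r j) :
    ∫⁻ t, K t * ‖f (x - t)‖ₑ ≤ (∑' j, c j * ENNReal.ofReal (4 * r j)) * cmax f y := by
  have hball : ∀ j, ∫⁻ u in ball x (r j), ‖f u‖ₑ ≤ ENNReal.ofReal (4 * r j) * cmax f y := by
    intro j
    have hpos : 0 < r j := dist_nonneg.trans_lt (hxy j)
    calc ∫⁻ u in ball x (r j), ‖f u‖ₑ ≤ ∫⁻ u in ball y (2 * r j), ‖f u‖ₑ :=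
          lintegral_mono_set (ball_subset_ball' (by linarith [hxy j]))
      _ ≤ ENNReal.ofReal (2 * (2 * r j)) * cmax f y := lintegral_ball_le_cmax f y (by positivity)
      _ = ENNReal.ofReal (4 * r j) * cmax f y := by ring_nf
  have hshift : ∀ j u, (ball 0 (r j)).indicator (fun _ => c j) (x - u) * ‖f u‖ₑ =
      (ball x (r j)).indicator (fun u => c j * ‖f u‖ₑ) u := by
    intro j u
    by_cases hu : u ∈ ball x (r j)
    · rw [indicator_of_mem hu, indicator_of_mem (by rwa [mem_ball_zero_iff, ← mem_ball_iff_norm'])]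
    · rw [indicator_of_notMem hu,
        indicator_of_notMem (by rwa [mem_ball_zero_iff, ← mem_ball_iff_norm']), zero_mul]
  calc ∫⁻ t, K t * ‖f (x - t)‖ₑ = ∫⁻ u, K (x - u) * ‖f u‖ₑ := by
        rw [← lintegral_sub_left_eq_self _ x]
        simp only [sub_sub_cancel]
    _ ≤ ∫⁻ u, ∑' j, (ball x (r j)).indicator (fun u => c j * ‖f u‖ₑ) u := by
        refine lintegral_mono fun u => ?_
        simp only [← hshift, ENNReal.tsum_mul_right]
        gcongr
        exact hK (x - u)
    _ = ∑' j, c j * ∫⁻ u in ball x (r j), ‖f u‖ₑ := by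
        rw [lintegral_tsum fun j => (hf.enorm.const_mul _).indicator measurableSet_ball]
        congr 1 with j
        rw [lintegral_indicator measurableSet_ball, lintegral_const_mul'' _ hf.enorm.restrict]
    _ ≤ ∑' j, c j * (ENNReal.ofReal (4 * r j) * cmax f y) := by
        gcongr with j
        exact hball j
    _ = (∑' j, c j * ENNReal.ofReal (4 * r j)) * cmax f y := by
        rw [← ENNReal.tsum_mul_right]
        simp only [mul_assoc]

theorem lintegral_dilation_mul_comp_sub_le_cmax {k : ℝ → ℂ} {D : ℝ}
    (hk : ∀ s, ‖k s‖ ≤ D * (1 + s ^ 2)⁻¹) {N : ℝ} (hN : 0 < N) {f : ℝ → ℂ}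
    (hf : AEStronglyMeasurable f) {x y : ℝ} (hxy : dist x y < 1 / N) :
    ∫⁻ t, ‖(N • k (N * t)) * f (x - t)‖ₑ ≤ ENNReal.ofReal (32 * D) * cmax f y := by
  have hD : 0 ≤ D := by simpa using (norm_nonneg _).trans (hk 0)
  have hK : ∀ t, ‖N • k (N * t)‖ₑ ≤ ∑' j : ℕ, (ball 0 (2 ^ j / N)).indicator
      (fun _ => ENNReal.ofReal D * ENNReal.ofReal (4 * N / 4 ^ j)) t := by
    intro t
    simp only [indicator_mul_right _ (fun _ => ENNReal.ofReal D), ENNReal.tsum_mul_left]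
    calc ‖N • k (N * t)‖ₑ = ENNReal.ofReal (N * ‖k (N * t)‖) := by
          rw [← ofReal_norm, norm_smul, Real.norm_of_nonneg hN.le]
      _ ≤ ENNReal.ofReal D * ENNReal.ofReal (N * (1 + (N * t) ^ 2)⁻¹) := by
          rw [← ENNReal.ofReal_mul hD]
          refine ENNReal.ofReal_le_ofReal ?_
          nlinarith [hk (N * t)]
      _ ≤ _ := by gcongr; exact ofReal_mul_inv_one_add_sq_le_tsum_indicator hN t
  have hr : ∀ j : ℕ, dist x y < 2 ^ j / N := fun j =>
    hxy.trans_le (div_le_div_of_nonneg_right (one_le_pow₀ one_le_two) hN.le)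
  have hsum : ∑' j : ℕ, ENNReal.ofReal D * ENNReal.ofReal (4 * N / 4 ^ j) *
      ENNReal.ofReal (4 * (2 ^ j / N)) = ENNReal.ofReal (32 * D) := by
    have hterm : ∀ j : ℕ, ENNReal.ofReal D * ENNReal.ofReal (4 * N / 4 ^ j) *
        ENNReal.ofReal (4 * (2 ^ j / N)) = ENNReal.ofReal (32 * D / 2 / 2 ^ j) := by
      intro j
      rw [← ENNReal.ofReal_mul hD, ← ENNReal.ofReal_mul (by positivity)]
      congr 1
      rw [show (4 : ℝ) ^ j = 2 ^ j * 2 ^ j by rw [← mul_pow]; norm_num]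
      field_simp
      ring
    simp only [hterm]
    rw [← ENNReal.ofReal_tsum_of_nonneg (fun j => by positivity) (summable_geometric_two' _),
      tsum_geometric_two']
  simp only [enorm_mul]
  exact hsum ▸ lintegral_mul_comp_sub_le_cmax hK hf hr

theorem tsum_ofReal_mul_le_setLIntegral_abs_ge {h : ℝ} (hh : 0 < h) (m : ℕ)
    {a : ℤ → ℝ≥0∞} {g : ℝ → ℝ≥0∞} (hag : ∀ (n : ℤ) x, |x - h * n| ≤ h / 2 → a n ≤ g x) :
    ∑' n : {n : ℤ // (m : ℤ) ≤ |n|}, ENNReal.ofReal h * a n ≤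
      ∫⁻ x in {x : ℝ | ((m : ℝ) - 1 / 2) * h ≤ |x|}, g x := by
  set I : ℤ → Set ℝ := fun n => Ioc (-(h / 2) + n • h) (-(h / 2) + (n + 1) • h)
  have hI : ∀ n x, x ∈ I n → |x - h * n| ≤ h / 2 := by
    rintro n x ⟨hx₁, hx₂⟩
    simp only [zsmul_eq_mul, Int.cast_add, Int.cast_one] at hx₁ hx₂
    rw [abs_le]
    constructor <;> nlinarith
  have hdisj : Pairwise (Function.onFun Disjoint fun n : {n : ℤ // (m : ℤ) ≤ |n|} => I n) :=
    (pairwise_disjoint_Ioc_add_zsmul _ _).comp_of_injective Subtype.val_injective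
  have hsub : (⋃ n : {n : ℤ // (m : ℤ) ≤ |n|}, I n) ⊆ {x | ((m : ℝ) - 1 / 2) * h ≤ |x|} := by
    simp only [iUnion_subset_iff]
    rintro ⟨n, hn⟩ x hx
    have hmn : (m : ℝ) ≤ |(n : ℝ)| := by exact_mod_cast hn
    have htri := abs_sub_abs_le_abs_sub (h * n) x
    rw [abs_sub_comm, abs_mul, abs_of_pos hh] at htri
    show _ ≤ |x|
    nlinarith [hI n x hx]
  calc ∑' n : {n : ℤ // (m : ℤ) ≤ |n|}, ENNReal.ofReal h * a n
      = ∑' n : {n : ℤ // (m : ℤ) ≤ |n|}, ∫⁻ _ in I n, a n := by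
        congr 1 with n
        rw [setLIntegral_const, Real.volume_Ioc, mul_comm]
        congr 2
        simp only [zsmul_eq_mul, Int.cast_add, Int.cast_one]
        ring
    _ ≤ ∑' n : {n : ℤ // (m : ℤ) ≤ |n|}, ∫⁻ x in I n, g x :=
        ENNReal.tsum_le_tsum fun n => setLIntegral_mono' measurableSet_Ioc
          fun x hx => hag n x (hI n x hx)
    _ = ∫⁻ x in ⋃ n : {n : ℤ // (m : ℤ) ≤ |n|}, I n, g x :=
        (lintegral_iUnion (fun _ => measurableSet_Ioc) hdisj g).symm
    _ ≤ ∫⁻ x in {x : ℝ | ((m : ℝ) - 1 / 2) * h ≤ |x|}, g x := lintegral_mono_set hsub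

/-- Locality of the initial data `α_n = h (P_{≤π/(2h)}φ₀)(hn)`, where the smooth
Littlewood–Paley projection is realized as convolution with the Schwartz kernel
`N ψ(N·)` at scale `N = π/(2h)`:  `Σ_{|n|≥m} |α_n|² ≲ h ∫_{|x|≥(m-1/2)h} |ℳφ₀|²`,
uniformly in `h ∈ (0,1]` and `m ∈ ℕ`. -/
theorem stmt4 (ψ : SchwartzMap ℝ ℂ) :
    ∃ C > 0, ∀ h : ℝ, 0 < h → h ≤ 1 → ∀ φ₀ : ℝ → ℂ, MemLp φ₀ 2 (volume : Measure ℝ) →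
    ∀ m : ℕ,
    ENNReal.ofReal (∑' n : {n : ℤ // (m : ℤ) ≤ |n|},
        ‖h • ∫ y : ℝ, ((π / (2 * h)) • ψ ((π / (2 * h)) * y)) * φ₀ (h * (n : ℤ) - y)‖ ^ 2)
      ≤ ENNReal.ofReal (C * h) *
          ∫⁻ x in {x : ℝ | ((m : ℝ) - 1 / 2) * h ≤ |x|}, (cmax φ₀ x) ^ 2 := by
  obtain ⟨D, hD, hψ⟩ := ψ.exists_norm_le_mul_inv_one_add_sq
  refine ⟨(32 * D) ^ 2, by positivity, fun h hh _ φ₀ hφ m => ?_⟩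
  set α : ℤ → ℂ := fun n => ∫ y : ℝ, ((π / (2 * h)) • ψ ((π / (2 * h)) * y)) * φ₀ (h * n - y)
  have hα : ∀ (n : ℤ) x, |x - h * n| ≤ h / 2 →
      ENNReal.ofReal h * ‖α n‖ₑ ^ 2 ≤ ENNReal.ofReal ((32 * D) ^ 2 * h) * cmax φ₀ x ^ 2 := by
    intro n x hx
    have hxn : dist (h * n) x < 1 / (π / (2 * h)) := by
      rw [dist_comm, Real.dist_eq, one_div_div]
      exact hx.trans_lt (by rw [lt_div_iff₀ pi_pos]; nlinarith [pi_lt_four])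
    have hpt : ‖α n‖ₑ ≤ ENNReal.ofReal (32 * D) * cmax φ₀ x :=
      (enorm_integral_le_lintegral_enorm _).trans
        (lintegral_dilation_mul_comp_sub_le_cmax hψ (by positivity) hφ.1 hxn)
    rw [ENNReal.ofReal_mul (by positivity), ENNReal.ofReal_pow (by positivity),
      mul_comm (_ ^ 2) (ENNReal.ofReal h), mul_assoc, ← mul_pow]
    gcongr
  calc ENNReal.ofReal (∑' n : {n : ℤ // (m : ℤ) ≤ |n|}, ‖h • α n‖ ^ 2)
      ≤ ∑' n : {n : ℤ // (m : ℤ) ≤ |n|}, ENNReal.ofReal (‖h • α n‖ ^ 2) :=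
        ENNReal.ofReal_tsum_le_tsum_ofReal fun _ => by positivity
    _ = ∑' n : {n : ℤ // (m : ℤ) ≤ |n|}, ENNReal.ofReal h * (ENNReal.ofReal h * ‖α n‖ₑ ^ 2) := by
        congr 1 with n
        rw [← ofReal_norm, ← ENNReal.ofReal_pow (norm_nonneg _), ← ENNReal.ofReal_mul hh.le,
          ← ENNReal.ofReal_mul hh.le, norm_smul, Real.norm_of_nonneg hh.le]
        ring_nf
    _ ≤ ∫⁻ x in {x : ℝ | ((m : ℝ) - 1 / 2) * h ≤ |x|},
          ENNReal.ofReal ((32 * D) ^ 2 * h) * cmax φ₀ x ^ 2 :=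
        tsum_ofReal_mul_le_setLIntegral_abs_ge hh m hα
    _ = _ := lintegral_const_mul' _ _ ENNReal.ofReal_ne_top
end

section
/- Uniformly for m ∈ ℤ, | ∫_{-π}^{π} |sin θ|^{-3/8} e^{imθ} dθ/(2π) | ≲ ⟨m⟩^{-5/8}, where ⟨m⟩ = (1+m²)^{1/2}. -/
/-!
Translating by `π / m` flips the sign of `e^{imθ}`, so twice the `m`-th Fourier coefficient of a
`2π`-periodic `f` is bounded by `∫ |f θ - f (θ + π / m)|`. For `f = |sin|^{-a}` with `0 < a < 1`
this `L¹` modulus of continuity is `O(|h|^{1-a})`: if `|x - y| ≤ δ` then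
`|x^{-a} - y^{-a}| ≤ δ^{-a} (k (x / δ) + k (y / δ))` with `k t = min (t^{-a}) (a t^{-a-1})`
integrable on `(0, ∞)`; Jordan's inequality `sin θ ≥ 2θ/π` bounds integrals of decreasing
functions of `|sin θ|` over a period by integrals over `(0, 1)`, and the substitution `t = δ u`
produces the factor `δ^{1-a}`.
-/

open MeasureTheory Real Set Filter Function intervalIntegral

/-- The trivial bound near `0` and the mean value bound away from `0` for `x^{-a} - y^{-a}`,
`x ≤ y ≤ x + 1`. -/
noncomputable def negRpowMajorant (a t : ℝ) : ℝ := min (t ^ (-a)) (a * t ^ (-a - 1))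

section NegRpow

variable {a : ℝ}

theorem rpow_neg_sub_rpow_neg_le {x y : ℝ} (ha : 0 ≤ a) (hx : 0 < x) (hy : 0 < y) :
    x ^ (-a) - y ^ (-a) ≤ a * (y - x) * x ^ (-a - 1) := by
  have hyx : 0 < y / x := div_pos hy hx
  have hbernoulli : 1 - a * (y / x - 1) ≤ (y / x) ^ (-a) := by
    rw [rpow_def_of_pos hyx]
    nlinarith [add_one_le_exp (log (y / x) * -a), log_le_sub_one_of_pos hyx]
  have hy_eq : y ^ (-a) = x ^ (-a) * (y / x) ^ (-a) := by
    rw [div_rpow hy.le hx.le, mul_div_cancel₀ _ (rpow_pos_of_pos hx _).ne']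
  calc x ^ (-a) - y ^ (-a) = x ^ (-a) * (1 - (y / x) ^ (-a)) := by rw [hy_eq]; ring
    _ ≤ x ^ (-a) * (a * (y / x - 1)) := by
        gcongr
        linarith
    _ = a * (y - x) * x ^ (-a - 1) := by rw [rpow_sub_one hx.ne']; field_simp

theorem negRpowMajorant_nonneg (ha : 0 ≤ a) {t : ℝ} (ht : 0 ≤ t) : 0 ≤ negRpowMajorant a t :=
  le_min (rpow_nonneg ht _) (mul_nonneg ha (rpow_nonneg ht _))

theorem rpow_neg_sub_rpow_neg_le_negRpowMajorant {x y : ℝ} (ha : 0 ≤ a) (hx : 0 < x)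
    (hxy : x ≤ y) (hyx : y - x ≤ 1) : x ^ (-a) - y ^ (-a) ≤ negRpowMajorant a x := by
  refine le_min (by linarith [rpow_nonneg (hx.le.trans hxy) (-a)]) ?_
  calc x ^ (-a) - y ^ (-a) ≤ a * (y - x) * x ^ (-a - 1) :=
        rpow_neg_sub_rpow_neg_le ha hx (hx.trans_le hxy)
    _ ≤ a * 1 * x ^ (-a - 1) := by gcongr
    _ = a * x ^ (-a - 1) := by ring

theorem abs_rpow_neg_sub_rpow_neg_le {x y : ℝ} (ha : 0 ≤ a) (hx : 0 < x) (hy : 0 < y)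
    (hxy : |x - y| ≤ 1) :
    |x ^ (-a) - y ^ (-a)| ≤ negRpowMajorant a x + negRpowMajorant a y := by
  have hanti {s t : ℝ} (hs : 0 < s) (hst : s ≤ t) : t ^ (-a) ≤ s ^ (-a) :=
    rpow_le_rpow_of_nonpos hs hst (neg_nonpos.2 ha)
  rcases le_total x y with h | h
  · rw [abs_of_nonneg (sub_nonneg.2 (hanti hx h))]
    linarith [rpow_neg_sub_rpow_neg_le_negRpowMajorant ha hx h (by linarith [neg_abs_le (x - y)]),
      negRpowMajorant_nonneg ha hy.le]
  · rw [abs_of_nonpos (sub_nonpos.2 (hanti hy h))]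
    linarith [rpow_neg_sub_rpow_neg_le_negRpowMajorant ha hy h
      (by linarith [le_abs_self (x - y)]), negRpowMajorant_nonneg ha hx.le]

theorem abs_rpow_neg_sub_rpow_neg_le_of_abs_sub_le {x y δ : ℝ} (ha : 0 ≤ a) (hx : 0 < x)
    (hy : 0 < y) (hδ : 0 < δ) (hxy : |x - y| ≤ δ) :
    |x ^ (-a) - y ^ (-a)| ≤
      δ ^ (-a) * (negRpowMajorant a (x / δ) + negRpowMajorant a (y / δ)) := by
  have hscaled := abs_rpow_neg_sub_rpow_neg_le ha (div_pos hx hδ) (div_pos hy hδ)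
    (by rwa [← sub_div, abs_div, abs_of_pos hδ, div_le_one hδ])
  rwa [div_rpow hx.le hδ.le, div_rpow hy.le hδ.le, ← sub_div, abs_div,
    abs_of_pos (rpow_pos_of_pos hδ _), div_le_iff₀ (rpow_pos_of_pos hδ _), mul_comm] at hscaled

theorem antitoneOn_negRpowMajorant (ha : 0 ≤ a) : AntitoneOn (negRpowMajorant a) (Ioi 0) :=
  fun _ hs _ _ hst => min_le_min (rpow_le_rpow_of_nonpos hs hst (by linarith))
    (mul_le_mul_of_nonneg_left (rpow_le_rpow_of_nonpos hs hst (by linarith)) ha)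

theorem measurable_negRpowMajorant : Measurable (negRpowMajorant a) :=
  (measurable_id.pow_const _).min (measurable_const.mul (measurable_id.pow_const _))

theorem integrableOn_negRpowMajorant (ha0 : 0 < a) (ha1 : a < 1) :
    IntegrableOn (negRpowMajorant a) (Ioi 0) := by
  have hmeas {s : Set ℝ} : AEStronglyMeasurable (negRpowMajorant a) (volume.restrict s) :=
    measurable_negRpowMajorant.aestronglyMeasurable
  rw [← Ioc_union_Ioi_eq_Ioi zero_le_one]
  refine IntegrableOn.union ?_ ?_
  · refine Integrable.mono' ((intervalIntegrable_iff_integrableOn_Ioc_of_le zero_le_one).1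
      (intervalIntegral.intervalIntegrable_rpow' (by linarith : -1 < -a))) hmeas ?_
    filter_upwards [ae_restrict_mem measurableSet_Ioc] with t ht
    rw [norm_of_nonneg (negRpowMajorant_nonneg ha0.le ht.1.le)]
    exact min_le_left _ _
  · refine Integrable.mono' ((integrableOn_Ioi_rpow_of_lt (by linarith : -a - 1 < -1)
      zero_lt_one).const_mul a) hmeas ?_
    filter_upwards [ae_restrict_mem measurableSet_Ioi] with t ht
    rw [norm_of_nonneg (negRpowMajorant_nonneg ha0.le (zero_le_one.trans ht.le))]
    exact min_le_right _ _

end NegRpow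

theorem Function.Periodic.integral_comp_add_right_neg_pi_pi {E : Type*}
    [NormedAddCommGroup E] [NormedSpace ℝ E] {g : ℝ → E} (hg : Periodic g (2 * π)) (h : ℝ) :
    ∫ θ in -π..π, g (θ + h) = ∫ θ in -π..π, g θ := by
  have hshift := hg.intervalIntegral_add_eq (-π + h) (-π)
  rw [integral_comp_add_right]
  convert hshift using 2 <;> ring

theorem Function.Periodic.intervalIntegrable_of_neg_pi_pi {E : Type*} [NormedAddCommGroup E]
    {g : ℝ → E} (hg : Periodic g (2 * π)) (hint : IntervalIntegrable g volume (-π) π)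
    (a b : ℝ) : IntervalIntegrable g volume a b :=
  hg.intervalIntegrable two_pi_pos.ne' (t := -π) (by rwa [show -π + 2 * π = π by ring]) a b

theorem intervalIntegrable_and_integral_neg_pi_pi_eq_four_mul {g : ℝ → ℝ}
    (hper : Periodic g π) (hrefl : ∀ θ, g (π - θ) = g θ)
    (hint : IntervalIntegrable g volume 0 (π / 2)) :
    IntervalIntegrable g volume (-π) π ∧ ∫ θ in -π..π, g θ = 4 * ∫ θ in 0..π / 2, g θ := by
  have hint' : IntervalIntegrable g volume (π / 2) π := by
    simpa [hrefl, show π - π / 2 = π / 2 by ring] using (hint.comp_sub_left π).symm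
  have hall := hper.intervalIntegrable₀ pi_ne_zero (hint.trans hint')
  refine ⟨hall _ _, ?_⟩
  have hleft : ∫ θ in -π..0, g θ = ∫ θ in 0..π, g θ := by
    simpa using hper.intervalIntegral_add_eq (-π) 0
  have hright : ∫ θ in π / 2..π, g θ = ∫ θ in 0..π / 2, g θ := by
    simpa [hrefl, show π - π / 2 = π / 2 by ring] using
      (integral_comp_sub_left (a := 0) (b := π / 2) g π).symm
  rw [← integral_add_adjacent_intervals (hall (-π) 0) (hall 0 π), hleft,
    ← integral_add_adjacent_intervals hint hint', hright]
  ring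

theorem periodic_comp_abs_sin (φ : ℝ → ℝ) : Periodic (fun θ => φ |sin θ|) π :=
  fun θ => by simp only [sin_add_pi, abs_neg]

theorem periodic_two_pi_comp_abs_sin (φ : ℝ → ℝ) :
    Periodic (fun θ => φ |sin θ|) (2 * π) := by
  simpa [two_mul] using (periodic_comp_abs_sin φ).add_period (periodic_comp_abs_sin φ)

section AbsSin

variable {φ : ℝ → ℝ}

theorem comp_abs_sin_le_comp_two_div_pi_mul (hanti : AntitoneOn φ (Ioc 0 1)) {θ : ℝ}
    (hθ : θ ∈ Icc 0 (π / 2)) : φ |sin θ| ≤ φ (2 / π * θ) := by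
  rcases hθ.1.eq_or_lt with rfl | hθ0
  · simp
  have hjordan := mul_le_sin hθ.1 hθ.2
  have hmem : 2 / π * θ ∈ Ioc 0 1 :=
    ⟨by positivity, by rw [div_mul_eq_mul_div, div_le_one pi_pos]; linarith [hθ.2]⟩
  rw [abs_of_nonneg ((hmem.1.le).trans hjordan)]
  exact hanti hmem ⟨hmem.1.trans_le hjordan, sin_le_one θ⟩ hjordan

theorem intervalIntegrable_comp_abs_sin_and_integral_le (hmeas : Measurable φ)
    (hanti : AntitoneOn φ (Ioc 0 1)) (hnonneg : ∀ t ∈ Icc 0 1, 0 ≤ φ t)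
    (hint : IntervalIntegrable φ volume 0 1) :
    IntervalIntegrable (fun θ => φ |sin θ|) volume (-π) π ∧
      ∫ θ in -π..π, φ |sin θ| ≤ 2 * π * ∫ t in 0..1, φ t := by
  have hcomp : IntervalIntegrable (fun θ => φ (2 / π * θ)) volume 0 (π / 2) := by
    simpa [div_div_eq_mul_div] using hint.comp_mul_left (c := 2 / π)
  have hle {θ : ℝ} (hθ : θ ∈ Icc 0 (π / 2)) := comp_abs_sin_le_comp_two_div_pi_mul hanti hθ
  have hquarter : IntervalIntegrable (fun θ => φ |sin θ|) volume 0 (π / 2) := by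
    refine hcomp.mono_fun (hmeas.comp continuous_sin.abs.measurable).aestronglyMeasurable ?_
    rw [uIoc_of_le (by positivity)]
    filter_upwards [ae_restrict_mem measurableSet_Ioc] with θ hθ
    have hsin := hnonneg _ ⟨abs_nonneg _, abs_sin_le_one θ⟩
    rw [norm_of_nonneg hsin, norm_of_nonneg (hsin.trans (hle (Ioc_subset_Icc_self hθ)))]
    exact hle (Ioc_subset_Icc_self hθ)
  obtain ⟨hint', heq⟩ := intervalIntegrable_and_integral_neg_pi_pi_eq_four_mul
    (periodic_comp_abs_sin φ) (fun θ => by simp only [sin_pi_sub]) hquarter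
  refine ⟨hint', ?_⟩
  have hchange : ∫ θ in 0..π / 2, φ (2 / π * θ) = π / 2 * ∫ t in 0..1, φ t := by
    rw [integral_comp_mul_left _ (by positivity), mul_zero,
      show 2 / π * (π / 2) = 1 by field_simp, smul_eq_mul, inv_div]
  calc ∫ θ in -π..π, φ |sin θ| = 4 * ∫ θ in 0..π / 2, φ |sin θ| := heq
    _ ≤ 4 * ∫ θ in 0..π / 2, φ (2 / π * θ) := by
        gcongr
        exact integral_mono_on (by positivity) hquarter hcomp fun θ hθ => hle hθ
    _ = 2 * π * ∫ t in 0..1, φ t := by rw [hchange]; ring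

end AbsSin

theorem ae_sin_add_ne_zero (c : ℝ) : ∀ᵐ θ : ℝ, sin (θ + c) ≠ 0 := by
  rw [ae_iff]
  refine measure_mono_null (fun θ hθ => ?_)
    ((countable_range fun k : ℤ => k * π - c).measure_zero volume)
  obtain ⟨k, hk⟩ := sin_eq_zero_iff.1 (not_not.1 hθ)
  exact ⟨k, by linarith⟩

theorem periodic_exp_I_mul_int_mul (m : ℤ) :
    Periodic (fun θ : ℝ => Complex.exp (Complex.I * m * θ)) (2 * π) := fun θ => by
  dsimp only
  rw [show Complex.I * m * ((θ + 2 * π : ℝ) : ℂ) = Complex.I * m * θ + m * (2 * π * Complex.I) by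
      push_cast; ring, Complex.exp_add, Complex.exp_int_mul_two_pi_mul_I, mul_one]

theorem norm_exp_I_mul_int_mul (m : ℤ) (θ : ℝ) : ‖Complex.exp (Complex.I * m * θ)‖ = 1 := by
  rw [mul_assoc, ← Complex.ofReal_intCast, ← Complex.ofReal_mul, Complex.norm_exp_I_mul_ofReal]

theorem exp_I_mul_int_mul_add_pi_div {m : ℤ} (hm : m ≠ 0) (θ : ℝ) :
    Complex.exp (Complex.I * m * ((θ + π / m : ℝ) : ℂ)) = -Complex.exp (Complex.I * m * θ) := by
  have hm' : (m : ℂ) ≠ 0 := Int.cast_ne_zero.2 hm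
  rw [show Complex.I * m * ((θ + π / m : ℝ) : ℂ) = Complex.I * m * θ + π * Complex.I by
      push_cast; field_simp, Complex.exp_add, Complex.exp_pi_mul_I, mul_neg_one]

theorem two_mul_norm_integral_smul_exp_le {f : ℝ → ℝ} (hper : Periodic f (2 * π))
    (hint : IntervalIntegrable f volume (-π) π) {m : ℤ} (hm : m ≠ 0) :
    2 * ‖∫ θ in -π..π, f θ • Complex.exp (Complex.I * m * θ)‖ ≤
      ∫ θ in -π..π, |f θ - f (θ + π / m)| := by
  set e : ℝ → ℂ := fun θ => Complex.exp (Complex.I * m * θ)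
  have he : Continuous e := by fun_prop
  have hall := hper.intervalIntegrable_of_neg_pi_pi hint
  have hshift : IntervalIntegrable (fun θ => f (θ + π / m)) volume (-π) π := by
    simpa using (hall (-π + π / m) (π + π / m)).comp_add_right (π / m)
  have hantiperiod : ∫ θ in -π..π, f (θ + π / m) • e θ = -∫ θ in -π..π, f θ • e θ := by
    have hprod : Periodic (fun θ => f θ • e θ) (2 * π) := fun θ => by
      simp only [hper θ, periodic_exp_I_mul_int_mul m θ, e]
    rw [← hprod.integral_comp_add_right_neg_pi_pi (π / m), ← intervalIntegral.integral_neg]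
    congr 1 with θ
    simp only [e, exp_I_mul_int_mul_add_pi_div hm, smul_neg, neg_neg]
  have htwice : (2 : ℝ) • ∫ θ in -π..π, f θ • e θ =
      ∫ θ in -π..π, (f θ - f (θ + π / m)) • e θ := by
    simp only [sub_smul]
    rw [integral_sub (hint.smul_continuousOn he.continuousOn)
      (hshift.smul_continuousOn he.continuousOn), hantiperiod, sub_neg_eq_add, two_smul]
  calc 2 * ‖∫ θ in -π..π, f θ • e θ‖ = ‖(2 : ℝ) • ∫ θ in -π..π, f θ • e θ‖ := by
        rw [norm_smul, Real.norm_two]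
    _ ≤ ∫ θ in -π..π, ‖(f θ - f (θ + π / m)) • e θ‖ := by
        rw [htwice]; exact norm_integral_le_integral_norm (by linarith [pi_pos])
    _ = ∫ θ in -π..π, |f θ - f (θ + π / m)| := by
        simp only [norm_smul, e, norm_exp_I_mul_int_mul, mul_one, Real.norm_eq_abs]

section Modulus

variable {a : ℝ}

theorem intervalIntegrable_negRpowMajorant_div_and_integral_le (ha0 : 0 < a) (ha1 : a < 1)
    {δ : ℝ} (hδ : 0 < δ) :
    IntervalIntegrable (fun t => negRpowMajorant a (t / δ)) volume 0 1 ∧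
      ∫ t in 0..1, negRpowMajorant a (t / δ) ≤ δ * ∫ t in Ioi 0, negRpowMajorant a t := by
  have hI : IntegrableOn (fun t => negRpowMajorant a (t / δ)) (Ioi 0) := by
    simp_rw [div_eq_inv_mul]
    rw [integrableOn_Ioi_comp_mul_left_iff _ _ (inv_pos.2 hδ), mul_zero]
    exact integrableOn_negRpowMajorant ha0 ha1
  refine ⟨(intervalIntegrable_iff_integrableOn_Ioc_of_le zero_le_one).2
    (hI.mono_set Ioc_subset_Ioi_self), ?_⟩
  rw [integral_of_le zero_le_one]
  calc ∫ t in Ioc 0 1, negRpowMajorant a (t / δ)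
      ≤ ∫ t in Ioi 0, negRpowMajorant a (t / δ) := by
        refine setIntegral_mono_set hI ?_ Ioc_subset_Ioi_self.eventuallyLE
        filter_upwards [ae_restrict_mem measurableSet_Ioi] with t ht
        exact negRpowMajorant_nonneg ha0.le (div_pos ht hδ).le
    _ = δ * ∫ t in Ioi 0, negRpowMajorant a t := by
        simp_rw [div_eq_inv_mul]
        rw [integral_comp_mul_left_Ioi _ _ (inv_pos.2 hδ), mul_zero, inv_inv, smul_eq_mul]

theorem intervalIntegrable_negRpowMajorant_abs_sin_div_and_integral_le (ha0 : 0 < a)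
    (ha1 : a < 1) {δ : ℝ} (hδ : 0 < δ) :
    IntervalIntegrable (fun θ => negRpowMajorant a (|sin θ| / δ)) volume (-π) π ∧
      ∫ θ in -π..π, negRpowMajorant a (|sin θ| / δ) ≤
        2 * π * δ * ∫ t in Ioi 0, negRpowMajorant a t := by
  obtain ⟨hint, hle⟩ := intervalIntegrable_negRpowMajorant_div_and_integral_le ha0 ha1 hδ
  obtain ⟨hint', hle'⟩ := intervalIntegrable_comp_abs_sin_and_integral_le
    (φ := fun t => negRpowMajorant a (t / δ))
    (measurable_negRpowMajorant.comp (measurable_id.div_const δ))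
    (fun s hs t ht hst => antitoneOn_negRpowMajorant ha0.le (div_pos hs.1 hδ)
      (div_pos ht.1 hδ) (div_le_div_of_nonneg_right hst hδ.le))
    (fun t ht => negRpowMajorant_nonneg ha0.le (div_nonneg ht.1 hδ.le)) hint
  refine ⟨hint', hle'.trans ?_⟩
  rw [mul_assoc (2 * π)]
  gcongr

theorem intervalIntegrable_abs_sin_rpow_neg (ha0 : 0 ≤ a) (ha1 : a < 1) :
    IntervalIntegrable (fun θ => |sin θ| ^ (-a)) volume (-π) π :=
  (intervalIntegrable_comp_abs_sin_and_integral_le (φ := fun t => t ^ (-a))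
    (measurable_id.pow_const _)
    (fun _ hs _ _ hst => rpow_le_rpow_of_nonpos hs.1 hst (by linarith))
    (fun t ht => rpow_nonneg ht.1 _) (intervalIntegrable_rpow' (by linarith))).1

theorem ae_abs_sub_abs_sin_rpow_neg_le (ha : 0 ≤ a) {h : ℝ} (hh : h ≠ 0) :
    ∀ᵐ θ : ℝ, |(|sin θ| ^ (-a) - |sin (θ + h)| ^ (-a))| ≤
      |h| ^ (-a) * (negRpowMajorant a (|sin θ| / |h|) +
        negRpowMajorant a (|sin (θ + h)| / |h|)) := by
  -- off the zeros of `sin`, where the junk value `0 ^ (-a) = 0` would break the bound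
  filter_upwards [ae_sin_add_ne_zero 0, ae_sin_add_ne_zero h] with θ hθ hθh
  rw [add_zero] at hθ
  refine abs_rpow_neg_sub_rpow_neg_le_of_abs_sub_le ha (abs_pos.2 hθ) (abs_pos.2 hθh)
    (abs_pos.2 hh) ?_
  calc |(|sin θ| - |sin (θ + h)|)| ≤ |sin θ - sin (θ + h)| :=
        abs_abs_sub_abs_le_abs_sub _ _
    _ ≤ |θ - (θ + h)| := abs_sin_sub_sin_le _ _
    _ = |h| := by rw [sub_add_cancel_left, abs_neg]

theorem exists_integral_abs_sub_abs_sin_rpow_neg_le (ha0 : 0 < a) (ha1 : a < 1) :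
    ∃ K, ∀ h : ℝ,
      ∫ θ in -π..π, |(|sin θ| ^ (-a) - |sin (θ + h)| ^ (-a))| ≤ K * |h| ^ (1 - a) := by
  refine ⟨4 * π * ∫ t in Ioi 0, negRpowMajorant a t, fun h => ?_⟩
  rcases eq_or_ne h 0 with rfl | hh
  · simp [zero_rpow (by linarith : 1 - a ≠ 0)]
  have hδ : 0 < |h| := abs_pos.2 hh
  set G : ℝ → ℝ := fun θ => negRpowMajorant a (|sin θ| / |h|)
  obtain ⟨hG, hGle⟩ :=
    intervalIntegrable_negRpowMajorant_abs_sin_div_and_integral_le ha0 ha1 hδ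
  have hf := intervalIntegrable_abs_sin_rpow_neg ha0.le ha1
  have hshift {φ : ℝ → ℝ} (hint : IntervalIntegrable (fun θ => φ |sin θ|) volume (-π) π) :
      IntervalIntegrable (fun θ => φ |sin (θ + h)|) volume (-π) π := by
    simpa using ((periodic_two_pi_comp_abs_sin φ).intervalIntegrable_of_neg_pi_pi hint
      (-π + h) (π + h)).comp_add_right h
  have hGh : IntervalIntegrable (fun θ => G (θ + h)) volume (-π) π :=
    hshift (φ := fun t => negRpowMajorant a (t / |h|)) hG
  calc ∫ θ in -π..π, |(|sin θ| ^ (-a) - |sin (θ + h)| ^ (-a))|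
      ≤ ∫ θ in -π..π, |h| ^ (-a) * (G θ + G (θ + h)) :=
        intervalIntegral.integral_mono_ae (by linarith [pi_pos])
          (hf.sub (hshift (φ := (· ^ (-a))) hf)).abs ((hG.add hGh).const_mul _)
          (ae_abs_sub_abs_sin_rpow_neg_le ha0.le hh)
    _ = |h| ^ (-a) * (2 * ∫ θ in -π..π, G θ) := by
        rw [intervalIntegral.integral_const_mul, integral_add hG hGh,
          (periodic_two_pi_comp_abs_sin fun t => negRpowMajorant a (t / |h|)
            ).integral_comp_add_right_neg_pi_pi h, two_mul]
    _ ≤ |h| ^ (-a) * (2 * (2 * π * |h| * ∫ t in Ioi 0, negRpowMajorant a t)) := by gcongr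
    _ = 4 * π * (∫ t in Ioi 0, negRpowMajorant a t) * |h| ^ (1 - a) := by
        rw [sub_eq_add_neg, rpow_add hδ, rpow_one]; ring

theorem exists_norm_integral_abs_sin_rpow_smul_exp_le (ha0 : 0 < a) (ha1 : a < 1) :
    ∃ A, ∀ m : ℤ, m ≠ 0 →
      ‖∫ θ in -π..π, |sin θ| ^ (-a) • Complex.exp (Complex.I * m * θ)‖ ≤
        A * |(m : ℝ)| ^ (-(1 - a)) := by
  obtain ⟨K, hK⟩ := exists_integral_abs_sub_abs_sin_rpow_neg_le ha0 ha1
  refine ⟨K / 2 * π ^ (1 - a), fun m hm => ?_⟩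
  have hm' : 0 < |(m : ℝ)| := abs_pos.2 (Int.cast_ne_zero.2 hm)
  have hscale : |π / m| ^ (1 - a) = π ^ (1 - a) * |(m : ℝ)| ^ (-(1 - a)) := by
    rw [abs_div, abs_of_pos pi_pos, div_rpow pi_pos.le hm'.le, rpow_neg hm'.le, div_eq_mul_inv]
  linarith [hscale ▸ hK (π / m), two_mul_norm_integral_smul_exp_le
    (periodic_two_pi_comp_abs_sin (· ^ (-a))) (intervalIntegrable_abs_sin_rpow_neg ha0.le ha1) hm]

end Modulus

theorem abs_rpow_neg_le_two_rpow_mul_one_add_sq_rpow {s x : ℝ} (hs : 0 ≤ s) (hx : 1 ≤ |x|) :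
    |x| ^ (-s) ≤ 2 ^ (s / 2) * (1 + x ^ 2) ^ (-s / 2) := by
  have hsq : 1 + x ^ 2 ≤ 2 * |x| ^ 2 := by rw [sq_abs]; nlinarith [sq_abs x]
  have hx2 : |x| ^ (-s) = 2 ^ (s / 2) * (2 * |x| ^ 2) ^ (-s / 2) := by
    rw [mul_rpow zero_le_two (by positivity), ← mul_assoc, ← rpow_add zero_lt_two,
      ← rpow_natCast, ← rpow_mul (abs_nonneg x), show s / 2 + -s / 2 = 0 by ring, rpow_zero,
      one_mul]
    ring_nf
  rw [hx2]
  exact mul_le_mul_of_nonneg_left (rpow_le_rpow_of_nonpos (by positivity) hsq (by linarith))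
    (by positivity)

theorem exists_le_mul_one_add_sq_rpow {u : ℤ → ℝ} {s A : ℝ} (hs : 0 ≤ s)
    (hu : ∀ m : ℤ, m ≠ 0 → u m ≤ A * |(m : ℝ)| ^ (-s)) :
    ∃ C > 0, ∀ m : ℤ, u m ≤ C * (1 + (m : ℝ) ^ 2) ^ (-s / 2) := by
  refine ⟨max 1 (max (u 0) (max A 0 * 2 ^ (s / 2))), by positivity, fun m => ?_⟩
  rcases eq_or_ne m 0 with rfl | hm
  · simp
  have hm1 : 1 ≤ |(m : ℝ)| := by rw [← Int.cast_abs]; exact_mod_cast Int.one_le_abs hm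
  calc u m ≤ A * |(m : ℝ)| ^ (-s) := hu m hm
    _ ≤ max A 0 * |(m : ℝ)| ^ (-s) := by gcongr; exact le_max_left _ _
    _ ≤ max A 0 * (2 ^ (s / 2) * (1 + (m : ℝ) ^ 2) ^ (-s / 2)) := by
        gcongr; exact abs_rpow_neg_le_two_rpow_mul_one_add_sq_rpow hs hm1
    _ ≤ _ := by
        rw [← mul_assoc]; gcongr; exact (le_max_right _ _).trans (le_max_right _ _)

/-- Fourier coefficient bound for the singular weight `|sin θ|^{-3/8}`:
`|∫_{-π}^{π} |sin θ|^{-3/8} e^{imθ} dθ/(2π)| ≲ ⟨m⟩^{-5/8}` uniformly in `m ∈ ℤ`. -/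
theorem stmt8 : ∃ C > 0, ∀ m : ℤ,
    ‖(2 * π)⁻¹ • ∫ θ in (-π)..π,
        (|Real.sin θ| ^ (-(3 : ℝ) / 8) : ℝ) • Complex.exp (Complex.I * m * θ)‖
      ≤ C * (1 + (m : ℝ) ^ 2) ^ (-(5 : ℝ) / 16) := by
  obtain ⟨A, hA⟩ := exists_norm_integral_abs_sin_rpow_smul_exp_le (a := 3 / 8) (by norm_num)
    (by norm_num)
  obtain ⟨C, hC, hbound⟩ :=
    exists_le_mul_one_add_sq_rpow (s := 1 - 3 / 8) (A := (2 * π)⁻¹ * A)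
    (u := fun m : ℤ => ‖(2 * π)⁻¹ • ∫ θ in -π..π,
      |Real.sin θ| ^ (-(3 / 8 : ℝ)) • Complex.exp (Complex.I * m * θ)‖) (by norm_num)
    (fun m hm => by
      rw [norm_smul, norm_inv, Real.norm_of_nonneg two_pi_pos.le, mul_assoc]
      exact mul_le_mul_of_nonneg_left (hA m hm) (by positivity))
  refine ⟨C, hC, fun m => ?_⟩
  convert hbound m using 3 <;> norm_num
end

section
/- Let α : ℝ → ℓ²(ℤ;ℂ) be continuously differentiable with M(α(t)) := -Σ_n ln(1 - ε|α_n(t)|²) conserved in time (ε = ±1). If ‖α(0)‖_{ℓ²}² ≤ 1/100, then the bound ‖α(t)‖_{ℓ²}² ≤ 1/20 holds for all t, and moreover (1/2)|M(α(t))| ≤ ‖α(t)‖_{ℓ²}² ≤ 2|M(α(t))| for all t. -/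
open Real

/-!
Each term of `M` is comparable to `|α_n|²`: for `0 ≤ x < 1`,
`x / (1 + x) ≤ -ε log (1 - ε x) ≤ x / (1 - x)`, and all terms have the same sign, so
`‖α‖² / (1 + ‖α‖²) ≤ |M(α)| ≤ ‖α‖² / (1 - ‖α‖²)`. At `t = 0` this gives `|M| ≤ 1/99`; by
conservation, whenever `‖α(t)‖² ≤ 1/20` we get `‖α(t)‖² ≤ (21/20)|M| < 1/20`. So the closed set
`{t | ‖α(t)‖² ≤ 1/20}` is also open, contains `0`, and is all of `ℝ` by connectedness.
-/

theorem lp.hasSum_norm_sq {ι : Type*} {E : ι → Type*} [∀ i, NormedAddCommGroup (E i)]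
    (f : lp E 2) : HasSum (fun i => ‖f i‖ ^ 2) (‖f‖ ^ 2) := by
  simpa using lp.hasSum_norm (p := 2) (by norm_num) f

theorem Continuous.forall_le_of_le_imp_lt {X α : Type*} [TopologicalSpace X]
    [PreconnectedSpace X] [LinearOrder α] [TopologicalSpace α] [OrderClosedTopology α]
    {f : X → α} {b : α} (hf : Continuous f) {x₀ : X} (h₀ : f x₀ ≤ b)
    (h : ∀ x, f x ≤ b → f x < b) (x : X) : f x ≤ b := by
  have hset : {x | f x ≤ b} = {x | f x < b} :=
    Set.Subset.antisymm (fun x hx => h x hx) (fun _ hx => le_of_lt hx)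
  have hclopen : IsClopen {x | f x ≤ b} :=
    ⟨isClosed_le hf continuous_const, hset ▸ isOpen_lt hf continuous_const⟩
  exact (hclopen.eq_univ ⟨x₀, h₀⟩).ge (Set.mem_univ x)

theorem neg_mul_log_one_sub_mul_mem_Icc {ε x : ℝ} (hε : ε = 1 ∨ ε = -1)
    (hx0 : 0 ≤ x) (hx1 : x < 1) :
    -ε * log (1 - ε * x) ∈ Set.Icc (x / (1 + x)) (x / (1 - x)) := by
  have hx_le_div : x / (1 + x) ≤ x := div_le_self hx0 (by linarith)
  have hle_div_x : x ≤ x / (1 - x) := le_div_self hx0 (by linarith) (by linarith)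
  rcases hε with rfl | rfl
  · have h1x : 0 < 1 - x := by linarith
    have hinv : 1 - (1 - x)⁻¹ = -(x / (1 - x)) := by field_simp; ring
    have hlow := log_le_sub_one_of_pos h1x
    have hup := hinv ▸ one_sub_inv_le_log_of_pos h1x
    simp only [Set.mem_Icc, one_mul, neg_mul]
    constructor <;> linarith
  · have h1x : 0 < 1 + x := by linarith
    have hinv : 1 - (1 + x)⁻¹ = x / (1 + x) := by field_simp; ring
    have hlow := hinv ▸ one_sub_inv_le_log_of_pos h1x
    have hup := log_le_sub_one_of_pos h1x
    simp only [Set.mem_Icc, neg_neg, one_mul, neg_mul, sub_neg_eq_add]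
    constructor <;> linarith

theorem abs_tsum_log_one_sub_mul_mem_Icc {ι : Type*} {ε c : ℝ} (hε : ε = 1 ∨ ε = -1)
    {x : ι → ℝ} (hx0 : ∀ i, 0 ≤ x i) (hxc : ∀ i, x i ≤ c) (hc : c < 1) (hx : Summable x) :
    |∑' i, log (1 - ε * x i)| ∈ Set.Icc ((∑' i, x i) / (1 + c)) ((∑' i, x i) / (1 - c)) := by
  set g : ι → ℝ := fun i => -ε * log (1 - ε * x i)
  have hg i : g i ∈ Set.Icc (x i / (1 + c)) (x i / (1 - c)) := by
    obtain ⟨hlow, hup⟩ := neg_mul_log_one_sub_mul_mem_Icc hε (hx0 i) ((hxc i).trans_lt hc)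
    constructor
    · exact (div_le_div_of_nonneg_left (hx0 i) (by linarith [hx0 i]) (by linarith [hxc i])).trans
        hlow
    · exact hup.trans (div_le_div_of_nonneg_left (hx0 i) (by linarith) (by linarith [hxc i]))
  have hg0 i : 0 ≤ g i := (div_nonneg (hx0 i) (by linarith [hx0 i, hxc i])).trans (hg i).1
  have hgs : Summable g := hx.div_const _ |>.of_nonneg_of_le hg0 fun i => (hg i).2
  have hε_sq : ε * ε = 1 := by rcases hε with rfl | rfl <;> norm_num
  have hlog : ∑' i, log (1 - ε * x i) = -ε * ∑' i, g i := by
    rw [← tsum_mul_left]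
    refine tsum_congr fun i => ?_
    simp only [g, neg_mul_neg, ← mul_assoc, hε_sq, one_mul]
  have habs_ε : |ε| = 1 := by rcases hε with rfl | rfl <;> norm_num
  rw [hlog, abs_mul, abs_neg, habs_ε, one_mul, abs_of_nonneg (tsum_nonneg hg0),
    ← tsum_div_const, ← tsum_div_const]
  exact ⟨(hx.div_const _).tsum_le_tsum (fun i => (hg i).1) hgs,
    hgs.tsum_le_tsum (fun i => (hg i).2) (hx.div_const _)⟩

/-- Global `ℓ²` bound from conservation of the mass
`M(α(t)) = -Σ_n ln(1 - ε|α_n(t)|²)`: if `‖α(0)‖_{ℓ²}² ≤ 1/100` then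
`‖α(t)‖_{ℓ²}² ≤ 1/20` for all `t`, and `½|M(α(t))| ≤ ‖α(t)‖_{ℓ²}² ≤ 2|M(α(t))|`. -/
theorem stmt10 (ε : ℝ) (hε : ε = 1 ∨ ε = -1)
    (A : ℝ → lp (fun _ : ℤ => ℂ) 2) (hA : ContDiff ℝ 1 A)
    (hM : ∀ t : ℝ,
      (∑' n : ℤ, Real.log (1 - ε * ‖(A t : ∀ _ : ℤ, ℂ) n‖ ^ 2))
        = ∑' n : ℤ, Real.log (1 - ε * ‖(A 0 : ∀ _ : ℤ, ℂ) n‖ ^ 2))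
    (h0 : ∑' n : ℤ, ‖(A 0 : ∀ _ : ℤ, ℂ) n‖ ^ 2 ≤ 1 / 100) :
    ∀ t : ℝ,
      (∑' n : ℤ, ‖(A t : ∀ _ : ℤ, ℂ) n‖ ^ 2 ≤ 1 / 20) ∧
      (1 / 2) * |∑' n : ℤ, Real.log (1 - ε * ‖(A t : ∀ _ : ℤ, ℂ) n‖ ^ 2)|
        ≤ ∑' n : ℤ, ‖(A t : ∀ _ : ℤ, ℂ) n‖ ^ 2 ∧
      ∑' n : ℤ, ‖(A t : ∀ _ : ℤ, ℂ) n‖ ^ 2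
        ≤ 2 * |∑' n : ℤ, Real.log (1 - ε * ‖(A t : ∀ _ : ℤ, ℂ) n‖ ^ 2)| := by
  set S : ℝ → ℝ := fun t => ∑' n : ℤ, ‖(A t : ∀ _ : ℤ, ℂ) n‖ ^ 2
  set M : ℝ → ℝ := fun t => ∑' n : ℤ, log (1 - ε * ‖(A t : ∀ _ : ℤ, ℂ) n‖ ^ 2)
  have hS t : HasSum (fun n => ‖(A t : ∀ _ : ℤ, ℂ) n‖ ^ 2) (‖A t‖ ^ 2) := lp.hasSum_norm_sq _
  have hS0 t : 0 ≤ S t := tsum_nonneg fun _ => sq_nonneg _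
  have hbounds t (ht : S t < 1) : |M t| ∈ Set.Icc (S t / (1 + S t)) (S t / (1 - S t)) :=
    abs_tsum_log_one_sub_mul_mem_Icc hε (fun _ => sq_nonneg _)
      (fun n => (hS t).summable.le_tsum n fun _ _ => sq_nonneg _) ht (hS t).summable
  have hM0 : |M 0| ≤ 1 / 99 := by
    have hup := (hbounds 0 (by linarith)).2
    rw [le_div_iff₀ (by linarith)] at hup
    nlinarith [abs_nonneg (M 0)]
  have hbootstrap t (ht : S t ≤ 1 / 20) : S t < 1 / 20 := by
    have hlow := (hbounds t (by linarith)).1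
    rw [div_le_iff₀ (by linarith [hS0 t]), show M t = M 0 from hM t] at hlow
    nlinarith [abs_nonneg (M 0)]
  have hS_cont : Continuous S := by
    rw [show S = fun t => ‖A t‖ ^ 2 from funext fun t => (hS t).tsum_eq]
    exact hA.continuous.norm.pow 2
  have hsmall := hS_cont.forall_le_of_le_imp_lt (x₀ := 0) (by linarith) hbootstrap
  intro t
  obtain ⟨hlow, hup⟩ := hbounds t (by linarith [hsmall t])
  rw [div_le_iff₀ (by linarith [hS0 t])] at hlow
  rw [le_div_iff₀ (by linarith [hsmall t])] at hup
  refine ⟨hsmall t, ?_, ?_⟩ <;> nlinarith [hsmall t, hS0 t, abs_nonneg (M t)]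
end

section
/- The localizing functions χ_j(x) := sech(x-j)/(Σ_{k∈ℤ} sech⁶(x-k))^{1/6}, j ∈ ℤ, are well-defined smooth functions on ℝ satisfying Σ_{j∈ℤ} χ_j(x)⁶ = 1 for all x ∈ ℝ, and there is a constant C with Σ_{j∈ℤ} χ_j(x)² ≤ C for all x. -/
open Real

noncomputable def sech (x : ℝ) : ℝ := 1 / Real.cosh x

/-- The localizing functions `χ_j(x) = sech(x-j)/(Σ_k sech⁶(x-k))^{1/6}`. -/
noncomputable def chi (j : ℤ) (x : ℝ) : ℝ :=
  sech (x - j) / (∑' k : ℤ, sech (x - k) ^ 6) ^ ((1 : ℝ) / 6)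

lemma sech_pos (y : ℝ) : 0 < sech y := by
  unfold sech; positivity

lemma sech_le (y : ℝ) : sech y ≤ 2 * Real.exp (-|y|) := by
  have h : Real.exp |y| / 2 ≤ Real.cosh y := by
    rw [Real.cosh_eq]
    rcases abs_cases y with ⟨h1, _⟩ | ⟨h1, _⟩ <;> rw [h1] <;>
      [skip; skip] <;> gcongr ?_ / 2 <;> nlinarith [Real.exp_pos y, Real.exp_pos (-y)]
  have h2 : 0 < Real.exp |y| / 2 := by positivity
  calc sech y = 1 / Real.cosh y := rfl
    _ ≤ 1 / (Real.exp |y| / 2) := by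
        apply one_div_le_one_div_of_le h2 h
    _ = 2 * Real.exp (-|y|) := by rw [Real.exp_neg]; field_simp

lemma summable_exp_int (a : ℝ) (ha : 0 < a) :
    Summable fun k : ℤ => Real.exp (-(a * |(k : ℝ)|)) := by
  have hr : Real.exp (-a) < 1 := Real.exp_lt_one_iff.2 (by linarith)
  have hnn : (0:ℝ) ≤ Real.exp (-a) := (Real.exp_pos _).le
  have hnat : Summable fun n : ℕ => Real.exp (-(a * n)) := by
    have := summable_geometric_of_lt_one hnn hr
    refine this.congr fun n => ?_
    rw [← Real.exp_nat_mul]; ring_nf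
  apply Summable.of_nat_of_neg
  · refine hnat.congr fun n => ?_
    push_cast [abs_of_nonneg (show (0:ℝ) ≤ (n:ℝ) from Nat.cast_nonneg n)]
    norm_cast
  · refine hnat.congr fun n => ?_
    rw [Int.cast_neg, abs_neg]
    push_cast [abs_of_nonneg (show (0:ℝ) ≤ (n:ℝ) from Nat.cast_nonneg n)]
    norm_cast

lemma sech_pow_le (x : ℝ) (k : ℤ) (p : ℕ) :
    sech (x - k) ^ p ≤ (2 * Real.exp |x|) ^ p * Real.exp (-(p * |(k:ℝ)|)) := by
  have h1 : sech (x - k) ≤ 2 * Real.exp (|x| - |(k:ℝ)|) := by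
    refine (sech_le _).trans ?_
    have : |x| - |(k:ℝ)| ≤ |x - k| → -|x - k| ≤ |x| - |(k:ℝ)| ∨ True := fun _ => Or.inr trivial
    have h2 : -|x - (k:ℝ)| ≤ |x| - |(k:ℝ)| := by
      have := abs_sub_abs_le_abs_sub (k:ℝ) x
      have := abs_sub_comm (k:ℝ) x
      linarith [abs_nonneg (x - (k:ℝ))]
    have := Real.exp_le_exp.2 h2
    linarith
  calc sech (x - k) ^ p ≤ (2 * Real.exp (|x| - |(k:ℝ)|)) ^ p := by
        gcongr
        exact (sech_pos _).le
    _ = (2 * Real.exp |x|) ^ p * Real.exp (-(p * |(k:ℝ)|)) := by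
        rw [mul_pow, mul_pow, ← Real.exp_nat_mul, ← Real.exp_nat_mul, mul_assoc,
          ← Real.exp_add]
        congr 2
        ring

lemma summable_sech_pow (x : ℝ) (p : ℕ) (hp : 0 < p) :
    Summable fun k : ℤ => sech (x - k) ^ p := by
  refine Summable.of_nonneg_of_le (fun k => pow_nonneg (sech_pos _).le _)
    (fun k => sech_pow_le x k p) ?_
  exact (summable_exp_int p (by exact_mod_cast hp)).mul_left _

lemma D_pos (x : ℝ) : 0 < ∑' k : ℤ, sech (x - k) ^ 6 :=
  Summable.tsum_pos (summable_sech_pow x 6 (by norm_num))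
    (fun k => pow_nonneg (sech_pos _).le _) 0 (pow_pos (sech_pos _) _)

lemma coshC_re (w : ℂ) : (Complex.cosh w).re = Real.cosh w.re * Real.cos w.im := by
  have : Complex.cosh w = (Complex.exp w + Complex.exp (-w)) / 2 := rfl
  rw [this]
  have h2 : ((Complex.exp w + Complex.exp (-w)) / 2).re
      = ((Complex.exp w).re + (Complex.exp (-w)).re) / 2 := by
    simp [Complex.div_re, Complex.add_re, Complex.normSq]
  rw [h2, Complex.exp_re, Complex.exp_re, Real.cosh_eq]
  simp [Complex.neg_re, Complex.neg_im, Real.cos_neg]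
  ring

lemma coshC_lower {w : ℂ} (h : |w.im| ≤ 1) :
    Real.cos 1 * Real.cosh w.re ≤ ‖Complex.cosh w‖ := by
  have h1 : Real.cos 1 ≤ Real.cos w.im := by
    rw [← Real.cos_abs w.im]
    apply Real.cos_le_cos_of_nonneg_of_le_pi (abs_nonneg _) ?_ h
    linarith [Real.pi_gt_three]
  calc Real.cos 1 * Real.cosh w.re ≤ Real.cos w.im * Real.cosh w.re := by
        gcongr
    _ = (Complex.cosh w).re := by rw [coshC_re]; ring
    _ ≤ |(Complex.cosh w).re| := le_abs_self _
    _ ≤ ‖Complex.cosh w‖ := Complex.abs_re_le_norm _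

lemma cosh_ge (y : ℝ) : Real.exp |y| / 2 ≤ Real.cosh y := by
  rw [Real.cosh_eq]
  rcases abs_cases y with ⟨h1, _⟩ | ⟨h1, _⟩ <;> rw [h1] <;> gcongr ?_ / 2 <;>
    nlinarith [Real.exp_pos y, Real.exp_pos (-y)]

lemma cosh_ne_zero_strip {w : ℂ} (h : |w.im| ≤ 1) : Complex.cosh w ≠ 0 := by
  intro h0
  have h1 := coshC_lower h
  rw [h0] at h1
  simp only [norm_zero] at h1
  nlinarith [Real.cos_one_pos, Real.cosh_pos (x := w.re)]

noncomputable def Fc : ℂ → ℂ := fun z => ∑' k : ℤ, (1 / Complex.cosh (z - (k : ℂ))) ^ 6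

lemma inv_cosh_bound {z : ℂ} {R : ℝ} (hre : |z.re| ≤ R) (him : |z.im| ≤ 1) (k : ℤ) :
    ‖(1 / Complex.cosh (z - (k : ℂ))) ^ 6‖ ≤
      (2 / Real.cos 1 * Real.exp R) ^ 6 * Real.exp (-(6 * |(k : ℝ)|)) := by
  have him' : |(z - (k : ℂ)).im| ≤ 1 := by
    simpa using him
  have hre' : (z - (k : ℂ)).re = z.re - k := by simp
  have h1 : Real.cos 1 * (Real.exp |z.re - (k:ℝ)| / 2) ≤ ‖Complex.cosh (z - k)‖ := by
    refine le_trans ?_ (coshC_lower him')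
    rw [hre']
    gcongr
    · exact Real.cos_one_pos.le
    · exact cosh_ge _
  have hc := Real.cos_one_pos
  have hpos : (0:ℝ) < Real.cos 1 * (Real.exp |z.re - (k:ℝ)| / 2) := by
    positivity
  have h2 : ‖(1 / Complex.cosh (z - (k : ℂ)))‖ ≤ 2 / Real.cos 1 * Real.exp (-(|z.re - (k:ℝ)|)) := by
    rw [norm_div, norm_one]
    rw [div_le_iff₀ (lt_of_lt_of_le hpos h1)]
    have : 2 / Real.cos 1 * Real.exp (-(|z.re - (k:ℝ)|)) *
        (Real.cos 1 * (Real.exp |z.re - (k:ℝ)| / 2)) = 1 := by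
      rw [Real.exp_neg]
      field_simp
    calc (1:ℝ) = 2 / Real.cos 1 * Real.exp (-(|z.re - (k:ℝ)|)) *
        (Real.cos 1 * (Real.exp |z.re - (k:ℝ)| / 2)) := this.symm
      _ ≤ _ := by
          gcongr
  have h3 : Real.exp (-(|z.re - (k:ℝ)|)) ≤ Real.exp R * Real.exp (-|(k:ℝ)|) := by
    rw [← Real.exp_add, Real.exp_le_exp]
    have : |(k:ℝ)| ≤ |z.re| + |z.re - k| := by
      have := abs_sub_abs_le_abs_sub (k:ℝ) z.re
      have := abs_sub_comm (k:ℝ) z.re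
      linarith [abs_nonneg (z.re - (k:ℝ)), neg_abs_le ((k:ℝ))]
    linarith
  have h4 : ‖(1 / Complex.cosh (z - (k : ℂ)))‖ ≤
      2 / Real.cos 1 * Real.exp R * Real.exp (-|(k:ℝ)|) := by
    calc ‖(1 / Complex.cosh (z - (k : ℂ)))‖ ≤ 2 / Real.cos 1 * Real.exp (-(|z.re - (k:ℝ)|)) := h2
      _ ≤ 2 / Real.cos 1 * (Real.exp R * Real.exp (-|(k:ℝ)|)) := by
          gcongr
      _ = _ := by ring
  calc ‖(1 / Complex.cosh (z - (k : ℂ))) ^ 6‖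
      = ‖(1 / Complex.cosh (z - (k : ℂ)))‖ ^ 6 := norm_pow _ _
    _ ≤ (2 / Real.cos 1 * Real.exp R * Real.exp (-|(k:ℝ)|)) ^ 6 := by
        gcongr
        
    _ = (2 / Real.cos 1 * Real.exp R) ^ 6 * Real.exp (-(6 * |(k : ℝ)|)) := by
        rw [mul_pow, ← Real.exp_nat_mul]
        norm_num

lemma isOpen_UR (R : ℝ) : IsOpen {z : ℂ | |z.re| < R ∧ |z.im| < 1} := by
  have h1 : IsOpen {z : ℂ | |z.re| < R} :=
    isOpen_lt (continuous_abs.comp Complex.continuous_re) continuous_const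
  have h2 : IsOpen {z : ℂ | |z.im| < 1} :=
    isOpen_lt (continuous_abs.comp Complex.continuous_im) continuous_const
  exact h1.inter h2

lemma Fc_diffOn (R : ℝ) :
    DifferentiableOn ℂ Fc {z : ℂ | |z.re| < R ∧ |z.im| < 1} := by
  have hc := Real.cos_one_pos
  apply Complex.differentiableOn_tsum_of_summable_norm
    (u := fun k : ℤ => (2 / Real.cos 1 * Real.exp R) ^ 6 * Real.exp (-(6 * |(k : ℝ)|)))
  · exact ((summable_exp_int 6 (by norm_num)).mul_left _)
  · intro k
    refine DifferentiableOn.pow ?_ _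
    refine DifferentiableOn.div (differentiableOn_const 1) ?_ ?_
    · exact (Complex.differentiable_cosh.comp
        (differentiable_id.sub (differentiable_const _))).differentiableOn
    · intro z hz
      exact cosh_ne_zero_strip (by simpa using hz.2.le)
  · exact isOpen_UR R
  · intro k z hz
    exact inv_cosh_bound hz.1.le hz.2.le k

lemma Fc_analyticAt (x : ℝ) : AnalyticAt ℂ Fc (x : ℂ) := by
  have hS : IsOpen {z : ℂ | |z.im| < 1} :=
    isOpen_lt (continuous_abs.comp Complex.continuous_im) continuous_const
  have hdiff : DifferentiableOn ℂ Fc {z : ℂ | |z.im| < 1} := by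
    intro z hz
    have h1 : {w : ℂ | |w.re| < |z.re| + 1 ∧ |w.im| < 1} ∈ nhds z := by
      refine (isOpen_UR (|z.re| + 1)).mem_nhds ?_
      exact ⟨by linarith [abs_nonneg z.re], hz⟩
    exact (((Fc_diffOn (|z.re| + 1)) z ⟨by linarith [abs_nonneg z.re], hz⟩).differentiableAt
      h1).differentiableWithinAt
  exact (hdiff.analyticOnNhd hS) _ (by simp)

lemma Fc_real (x : ℝ) : Fc (x : ℂ) = ((∑' k : ℤ, sech (x - k) ^ 6 : ℝ) : ℂ) := by
  unfold Fc
  rw [Complex.ofReal_tsum]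
  congr 1
  funext k
  have h1 : (x : ℂ) - (k : ℂ) = ((x - k : ℝ) : ℂ) := by push_cast; ring
  rw [h1, ← Complex.ofReal_cosh]
  unfold sech
  push_cast
  ring

lemma D_analyticAt (x : ℝ) : AnalyticAt ℝ (fun y : ℝ => ∑' k : ℤ, sech (y - k) ^ 6) x := by
  have h1 : AnalyticAt ℝ Fc (x : ℂ) := (Fc_analyticAt x).restrictScalars
  have h2 : AnalyticAt ℝ (fun y : ℝ => (y : ℂ)) x := Complex.ofRealCLM.analyticAt x
  have h3 : AnalyticAt ℝ (fun y : ℝ => Fc (y : ℂ)) x := h1.comp h2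
  have h4 : AnalyticAt ℝ (fun y : ℝ => (Fc (y : ℂ)).re) x :=
    (Complex.reCLM.analyticAt _).comp h3
  have h5 : (fun y : ℝ => (Fc (y : ℂ)).re) = fun y : ℝ => ∑' k : ℤ, sech (y - k) ^ 6 := by
    funext y
    rw [Fc_real y, Complex.ofReal_re]
  rwa [h5] at h4

lemma analyticAt_rcosh (x : ℝ) : AnalyticAt ℝ Real.cosh x := by
  have h1 : AnalyticAt ℝ (fun y : ℝ => (Real.exp y + Real.exp (-y)) / 2) x := by
    apply AnalyticAt.div
    · exact (analyticAt_rexp.add (analyticAt_id.neg.rexp))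
    · exact analyticAt_const
    · norm_num
  have h2 : (fun y : ℝ => (Real.exp y + Real.exp (-y)) / 2) = Real.cosh := by
    funext y; rw [Real.cosh_eq]
  rwa [h2] at h1

lemma analyticAt_sech_shift (j : ℤ) (x : ℝ) : AnalyticAt ℝ (fun y : ℝ => sech (y - j)) x := by
  have h1 : AnalyticAt ℝ (fun y : ℝ => y - (j:ℝ)) x := analyticAt_id.sub analyticAt_const
  have h2 : AnalyticAt ℝ (fun y : ℝ => Real.cosh (y - j)) x := (analyticAt_rcosh _).comp h1
  exact analyticAt_const.div h2 (ne_of_gt (Real.cosh_pos _))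

lemma analyticAt_rlog {t : ℝ} (ht : 0 < t) : AnalyticAt ℝ Real.log t := by
  have hm : (t : ℂ) ∈ Complex.slitPlane := Complex.ofReal_mem_slitPlane.2 ht
  have h1 : AnalyticAt ℂ Complex.log (t : ℂ) := analyticAt_clog hm
  have h2 : AnalyticAt ℝ (fun y : ℝ => Complex.log (y : ℂ)) t :=
    h1.restrictScalars.comp (Complex.ofRealCLM.analyticAt t)
  have h3 : AnalyticAt ℝ (fun y : ℝ => (Complex.log (y : ℂ)).re) t :=
    (Complex.reCLM.analyticAt _).comp h2
  apply h3.congr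
  have hev : ∀ᶠ y in nhds t, y ∈ Set.Ioi (0:ℝ) := isOpen_Ioi.eventually_mem ht
  filter_upwards [hev] with y hy
  rw [Complex.log_re, Complex.norm_real, Real.norm_eq_abs, abs_of_pos hy]


lemma chi_contDiff (j : ℤ) : ContDiff ℝ (⊤ : ℕ∞) (chi j) := by
  apply AnalyticOnNhd.contDiff
  intro x _
  set D : ℝ → ℝ := fun y : ℝ => ∑' k : ℤ, sech (y - k) ^ 6 with hDdef
  have hD : AnalyticAt ℝ D x := D_analyticAt x
  have hDpos : 0 < D x := D_pos x
  have hrpow : AnalyticAt ℝ (fun y => D y ^ ((1:ℝ)/6)) x := by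
    have hg : AnalyticAt ℝ (fun y => Real.exp (Real.log (D y) * ((1:ℝ)/6))) x :=
      (((analyticAt_rlog hDpos).comp hD).mul analyticAt_const).rexp
    apply hg.congr
    have hev : ∀ᶠ y in nhds x, D y ∈ Set.Ioi (0:ℝ) :=
      hD.continuousAt.eventually_mem (isOpen_Ioi.mem_nhds hDpos)
    filter_upwards [hev] with y hy
    rw [Real.rpow_def_of_pos hy]
  have hne : D x ^ ((1:ℝ)/6) ≠ 0 := ne_of_gt (Real.rpow_pos_of_pos hDpos _)
  exact (analyticAt_sech_shift j x).div hrpow hne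

lemma chi_pow_eq (j : ℤ) (x : ℝ) (p : ℕ) :
    chi j x ^ p = sech (x - j) ^ p /
      (∑' k : ℤ, sech (x - k) ^ 6) ^ ((p : ℝ) / 6) := by
  unfold chi
  rw [div_pow]
  congr 1
  rw [← Real.rpow_natCast ((∑' k : ℤ, sech (x - k) ^ 6) ^ ((1:ℝ)/6)) p,
    ← Real.rpow_mul (D_pos x).le]
  congr 1
  ring

lemma tsum_chi_six (x : ℝ) : ∑' j : ℤ, chi j x ^ 6 = 1 := by
  have h6 : ((6:ℕ) : ℝ) / 6 = 1 := by norm_num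
  have h : ∀ j : ℤ, chi j x ^ 6 = sech (x - j) ^ 6 / (∑' k : ℤ, sech (x - k) ^ 6) := by
    intro j
    rw [chi_pow_eq j x 6, h6, Real.rpow_one]
  simp_rw [h]
  rw [tsum_div_const, div_self (ne_of_gt (D_pos x))]

lemma sech_anti {a b : ℝ} (h : |a| ≤ |b|) : sech b ≤ sech a := by
  unfold sech
  exact one_div_le_one_div_of_le (Real.cosh_pos _) (Real.cosh_le_cosh.2 h)

lemma D_lower (x : ℝ) : sech 1 ^ 6 ≤ ∑' k : ℤ, sech (x - k) ^ 6 := by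
  have hfr : |x - (⌊x⌋ : ℝ)| ≤ |(1:ℝ)| := by
    rw [abs_one, abs_of_nonneg (by linarith [Int.floor_le x])]
    linarith [Int.lt_floor_add_one x]
  have h1 : sech 1 ≤ sech (x - ⌊x⌋) := sech_anti hfr
  have h2 : sech 1 ^ 6 ≤ sech (x - ⌊x⌋) ^ 6 := by
    gcongr
    exact (sech_pos _).le
  refine h2.trans ?_
  exact Summable.le_tsum (summable_sech_pow x 6 (by norm_num)) ⌊x⌋
    (fun j _ => pow_nonneg (sech_pos _).le _)

set_option maxHeartbeats 1000000 in
lemma tsum_sech_sq_le (x : ℝ) :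
    ∑' j : ℤ, sech (x - j) ^ 2 ≤
      4 * Real.exp 2 * ∑' m : ℤ, Real.exp (-(2 * |(m:ℝ)|)) := by
  set T := ∑' m : ℤ, Real.exp (-(2 * |(m:ℝ)|))
  have hTs : Summable fun m : ℤ => Real.exp (-(2 * |(m:ℝ)|)) := summable_exp_int 2 (by norm_num)
  have hs2 : Summable fun j : ℤ => Real.exp (-(2 * |((⌊x⌋ - j : ℤ):ℝ)|)) :=
    (Equiv.subLeft (⌊x⌋:ℤ)).summable_iff.2 hTs
  have hbound : ∀ j : ℤ, sech (x - j) ^ 2 ≤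
      4 * Real.exp 2 * Real.exp (-(2 * |((⌊x⌋ - j : ℤ):ℝ)|)) := by
    intro j
    have h1 : sech (x - j) ^ 2 ≤ (2 * Real.exp (-|x - j|)) ^ 2 := by
      gcongr
      · exact (sech_pos _).le
      · exact sech_le _
    refine h1.trans ?_
    have habs : |((⌊x⌋ - j : ℤ):ℝ)| - 1 ≤ |x - j| := by
      push_cast
      have h3 : |(⌊x⌋:ℝ) - j| ≤ |(⌊x⌋:ℝ) - x| + |x - j| := abs_sub_le _ x _
      have h4 : |(⌊x⌋:ℝ) - x| ≤ 1 := by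
        rw [abs_sub_comm, abs_of_nonneg (by linarith [Int.floor_le x])]
        linarith [Int.lt_floor_add_one x]
      linarith
    have h5 : Real.exp (-|x - j|) ^ 2 = Real.exp (-(2 * |x - j|)) := by
      rw [← Real.exp_nat_mul]; norm_num
    rw [mul_pow, h5]
    have h6 : Real.exp (-(2 * |x - j|)) ≤ Real.exp 2 * Real.exp (-(2 * |((⌊x⌋ - j : ℤ):ℝ)|)) := by
      rw [← Real.exp_add, Real.exp_le_exp]
      linarith
    calc (2:ℝ)^2 * Real.exp (-(2 * |x - j|))
        ≤ (2:ℝ)^2 * (Real.exp 2 * Real.exp (-(2 * |((⌊x⌋ - j : ℤ):ℝ)|))) := by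
          gcongr
      _ = 4 * Real.exp 2 * Real.exp (-(2 * |((⌊x⌋ - j : ℤ):ℝ)|)) := by ring
  calc ∑' j : ℤ, sech (x - j) ^ 2
      ≤ ∑' j : ℤ, 4 * Real.exp 2 * Real.exp (-(2 * |((⌊x⌋ - j : ℤ):ℝ)|)) := by
        exact Summable.tsum_le_tsum hbound (summable_sech_pow x 2 (by norm_num)) (hs2.mul_left _)
    _ = 4 * Real.exp 2 * ∑' j : ℤ, Real.exp (-(2 * |((⌊x⌋ - j : ℤ):ℝ)|)) := tsum_mul_left
    _ = 4 * Real.exp 2 * T := by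
        congr 1
        exact (Equiv.subLeft (⌊x⌋:ℤ)).tsum_eq (fun m : ℤ => Real.exp (-(2 * |(m:ℝ)|)))

lemma tsum_chi_sq_le (x : ℝ) :
    ∑' j : ℤ, chi j x ^ 2 ≤
      (4 * Real.exp 2 * ∑' m : ℤ, Real.exp (-(2 * |(m:ℝ)|))) / (sech 1 ^ 6) ^ ((2:ℝ)/6) := by
  have hDpos := D_pos x
  have h : ∀ j : ℤ, chi j x ^ 2 = sech (x - j) ^ 2 /
      (∑' k : ℤ, sech (x - k) ^ 6) ^ ((2:ℝ)/6) := by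
    intro j
    have := chi_pow_eq j x 2
    norm_num at this ⊢
    convert this using 3
  simp_rw [h]
  rw [tsum_div_const]
  apply div_le_div₀
  · exact mul_nonneg (by positivity) (tsum_nonneg fun m => (Real.exp_pos _).le)
  · exact tsum_sech_sq_le x
  · exact Real.rpow_pos_of_pos (pow_pos (sech_pos _) _) _
  · exact Real.rpow_le_rpow (pow_nonneg (sech_pos _).le _) (D_lower x) (by norm_num)

/-- The `χ_j` are well-defined (positive denominator), smooth, satisfy `Σ_j χ_j⁶ ≡ 1`,
and `Σ_j χ_j² ≤ C` uniformly. -/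
theorem stmt14 :
    (∀ x : ℝ, 0 < ∑' k : ℤ, sech (x - k) ^ 6) ∧
    (∀ j : ℤ, ContDiff ℝ (⊤ : ℕ∞) (chi j)) ∧
    (∀ x : ℝ, ∑' j : ℤ, chi j x ^ 6 = 1) ∧
    (∃ C : ℝ, ∀ x : ℝ, ∑' j : ℤ, chi j x ^ 2 ≤ C) :=
  ⟨D_pos, chi_contDiff, tsum_chi_six,
    ⟨(4 * Real.exp 2 * ∑' m : ℤ, Real.exp (-(2 * |(m:ℝ)|))) / (sech 1 ^ 6) ^ ((2:ℝ)/6),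
      tsum_chi_sq_le⟩⟩
end
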